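/- arXiv:1703.03336 — 2 statements merged into one kernel-verified Lean document; each statement's English description precedes it below -/
import Mathlib

section
/- Let z1, z2 ≥ 0, γ1, γ2 ∈ [0,1), and λ1, λ2, λ3, μ1, μ2, μ3 ≥ 0 satisfy z1 ≤ λ1·z1^γ1 + λ2·z2 + λ3 and z2 ≤ μ1·z1 + μ2·z2^γ2 + μ3. If λ2·μ1 < 1, then there exists a constant M (depending only on the parameters λi, μi, γ1, γ2, but not on z1, z2) such that z1 ≤ M and z2 ≤ M. -/
/-!
Since `γ < 1`, the sublinear term `x ^ γ` is at most `ε * x + C` for any `ε > 0`. Absorbing these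
terms leaves a linear system `a z₁ ≤ l₂ z₂ + A`, `b z₂ ≤ m₁ z₁ + B` with `a, b` close to `1`, so
its determinant `a b - l₂ m₁` stays positive for small `ε`, and eliminating one unknown bounds the
other.
-/

open Filter Topology Real

lemma exists_rpow_le_mul_add {γ ε : ℝ} (hγ₀ : 0 ≤ γ) (hγ₁ : γ < 1) (hε : 0 < ε) :
    ∃ C, ∀ x, 0 ≤ x → x ^ γ ≤ ε * x + C := by
  obtain ⟨N, hN⟩ := eventually_atTop.1 <|
    ((tendsto_rpow_neg_atTop (sub_pos.2 hγ₁)).eventually (gt_mem_nhds hε)).and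
      (eventually_gt_atTop 0)
  refine ⟨N ^ γ, fun x hx => ?_⟩
  rcases le_total x N with hxN | hNx
  · have : 0 ≤ ε * x := by positivity
    linarith [rpow_le_rpow hx hxN hγ₀]
  · obtain ⟨hsmall, hxpos⟩ := hN x hNx
    calc x ^ γ = x ^ (-(1 - γ)) * x := by rw [← rpow_add_one hxpos.ne']; ring_nf
      _ ≤ ε * x := by gcongr
      _ ≤ ε * x + N ^ γ := le_add_of_nonneg_right (rpow_nonneg (hN N le_rfl).2.le _)

lemma le_div_sub_of_linear_system {a b p q A B x y : ℝ} (hb : 0 ≤ b) (hp : 0 ≤ p)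
    (hdet : p * q < a * b) (hx : a * x ≤ p * y + A) (hy : b * y ≤ q * x + B) :
    x ≤ (b * A + p * B) / (a * b - p * q) := by
  rw [le_div_iff₀ (sub_pos.2 hdet)]
  nlinarith [mul_le_mul_of_nonneg_left hx hb, mul_le_mul_of_nonneg_left hy hp]

theorem stmt_0_general (γ₁ γ₂ l₁ l₂ l₃ m₁ m₂ m₃ : ℝ)
    (hγ₁ : 0 ≤ γ₁) (hγ₁' : γ₁ < 1) (hγ₂ : 0 ≤ γ₂) (hγ₂' : γ₂ < 1)
    (hl₁ : 0 ≤ l₁) (hl₂ : 0 ≤ l₂)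
    (hm₁ : 0 ≤ m₁) (hm₂ : 0 ≤ m₂)
    (hcross : l₂ * m₁ < 1) :
    ∃ M : ℝ, ∀ z₁ z₂ : ℝ, 0 ≤ z₁ → 0 ≤ z₂ →
      z₁ ≤ l₁ * z₁ ^ γ₁ + l₂ * z₂ + l₃ →
      z₂ ≤ m₁ * z₁ + m₂ * z₂ ^ γ₂ + m₃ →
      z₁ ≤ M ∧ z₂ ≤ M := by
  have hsmall : ∀ᶠ ε in 𝓝[>] (0 : ℝ),
      0 ≤ 1 - l₁ * ε ∧ 0 ≤ 1 - m₂ * ε ∧ l₂ * m₁ < (1 - l₁ * ε) * (1 - m₂ * ε) := by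
    refine nhdsWithin_le_nhds (Eventually.and ?_ (Eventually.and ?_ ?_))
    · exact (continuousAt_const.eventually_lt (by fun_prop) (by simp)).mono fun _ h => h.le
    · exact (continuousAt_const.eventually_lt (by fun_prop) (by simp)).mono fun _ h => h.le
    · exact continuousAt_const.eventually_lt (by fun_prop) (by simpa using hcross)
  obtain ⟨ε, ⟨ha, hb, hdet⟩, hε⟩ := (hsmall.and self_mem_nhdsWithin).exists
  obtain ⟨C₁, hC₁⟩ := exists_rpow_le_mul_add hγ₁ hγ₁' hε
  obtain ⟨C₂, hC₂⟩ := exists_rpow_le_mul_add hγ₂ hγ₂' hε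
  set a := 1 - l₁ * ε
  set b := 1 - m₂ * ε
  set A := l₁ * C₁ + l₃
  set B := m₂ * C₂ + m₃
  refine ⟨max ((b * A + l₂ * B) / (a * b - l₂ * m₁)) ((a * B + m₁ * A) / (b * a - m₁ * l₂)),
    fun z₁ z₂ hz₁ hz₂ h₁ h₂ => ?_⟩
  have h₁' : a * z₁ ≤ l₂ * z₂ + A := by
    linarith [mul_le_mul_of_nonneg_left (hC₁ z₁ hz₁) hl₁]
  have h₂' : b * z₂ ≤ m₁ * z₁ + B := by
    linarith [mul_le_mul_of_nonneg_left (hC₂ z₂ hz₂) hm₂]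
  exact ⟨(le_div_sub_of_linear_system hb hl₂ hdet h₁' h₂').trans (le_max_left _ _),
    (le_div_sub_of_linear_system ha hm₁ (by linarith) h₂' h₁').trans (le_max_right _ _)⟩

theorem stmt_0 (γ₁ γ₂ l₁ l₂ l₃ m₁ m₂ m₃ : ℝ)
    (hγ₁ : 0 ≤ γ₁) (hγ₁' : γ₁ < 1) (hγ₂ : 0 ≤ γ₂) (hγ₂' : γ₂ < 1)
    (hl₁ : 0 ≤ l₁) (hl₂ : 0 ≤ l₂) (hl₃ : 0 ≤ l₃)
    (hm₁ : 0 ≤ m₁) (hm₂ : 0 ≤ m₂) (hm₃ : 0 ≤ m₃)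
    (hcross : l₂ * m₁ < 1) :
    ∃ M : ℝ, ∀ z₁ z₂ : ℝ, 0 ≤ z₁ → 0 ≤ z₂ →
      z₁ ≤ l₁ * z₁ ^ γ₁ + l₂ * z₂ + l₃ →
      z₂ ≤ m₁ * z₁ + m₂ * z₂ ^ γ₂ + m₃ →
      z₁ ≤ M ∧ z₂ ≤ M :=
  stmt_0_general γ₁ γ₂ l₁ l₂ l₃ m₁ m₂ m₃ hγ₁ hγ₁' hγ₂ hγ₂' hl₁ hl₂ hm₁ hm₂ hcross
end

section
/- Let H be a Hilbert space, A : H → H bounded linear, ξ ∈ (0,1), α ∈ (1,2], M = I - ξ^(α-1) A with Moore–Penrose inverse M⁺. Define the linear map Q₀ : H → H by Q₀(c) = (1/(ξ^α - 1)) · (I - M M⁺)(ξ^(2α-1) A - I)(c). Then Q₀ is idempotent: Q₀² = Q₀. -/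
theorem stmt_6 {H : Type*} [NormedAddCommGroup H] [InnerProductSpace ℝ H] [CompleteSpace H]
    (A : H →L[ℝ] H) (ξ α : ℝ) (hξ : ξ ∈ Set.Ioo (0:ℝ) 1) (hα : α ∈ Set.Ioc (1:ℝ) 2)
    (M Mp : H →L[ℝ] H) (hM : M = 1 - ξ ^ (α - 1) • A)
    (h1 : M * Mp * M = M) (h2 : Mp * M * Mp = Mp)
    (h3 : ContinuousLinearMap.adjoint (M * Mp) = M * Mp)
    (h4 : ContinuousLinearMap.adjoint (Mp * M) = Mp * M)
    (Q₀ : H →L[ℝ] H)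
    (hQ₀ : Q₀ = (ξ ^ α - 1)⁻¹ • ((1 - M * Mp) * (ξ ^ (2 * α - 1) • A - 1))) :
    Q₀ * Q₀ = Q₀ := by
  obtain ⟨hξ0, hξ1⟩ := hξ
  have hα0 : 0 < α := lt_trans one_pos hα.1
  have hlt : ξ ^ α < 1 := Real.rpow_lt_one (le_of_lt hξ0) hξ1 hα0
  have hne : ξ ^ α - 1 ≠ 0 := sub_ne_zero.mpr (ne_of_lt hlt)
  have hsplit : ξ ^ (2 * α - 1) = ξ ^ α * ξ ^ (α - 1) := by
    rw [← Real.rpow_add hξ0]; ring_nf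
  have hA : ξ ^ (α - 1) • A = 1 - M := by rw [hM]; abel
  have hAM : (ξ ^ (2 * α - 1)) • A - 1 = (ξ ^ α - 1) • (1 : H →L[ℝ] H) - ξ ^ α • M := by
    rw [hsplit, mul_smul, hA]
    simp [smul_sub, sub_smul]
    abel
  have hPM : (1 - M * Mp) * M = 0 := by
    rw [sub_mul, one_mul, h1, sub_self]
  have hkey : (1 - M * Mp) * ((ξ ^ (2 * α - 1)) • A - 1)
      = (ξ ^ α - 1) • (1 - M * Mp) := by
    rw [hAM, mul_sub, mul_smul_comm, mul_smul_comm, hPM, smul_zero, sub_zero, mul_one]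
  have hQ : Q₀ = 1 - M * Mp := by
    rw [hQ₀, hkey, smul_smul, inv_mul_cancel₀ hne, one_smul]
  have hPP : (M * Mp) * (M * Mp) = M * Mp := by
    rw [← mul_assoc, mul_assoc M Mp M, ← mul_assoc, h1]
  rw [hQ]
  rw [sub_mul, mul_sub, mul_sub, one_mul, mul_one, hPP]
  abel
end
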